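/- Let d ≥ 1 be an integer, α, L > 0, 0 < ε₀ < 1, and let q ≥ 1 be a real number. There exists a constant C > 0, depending only on d, α, L, ε₀ and q, such that for all integers n ≥ 2, sup over (μ,K) ∈ M(α,L,ε₀) of E_μ[d_H(K̂ₙ,K)^q] ≤ C·(ln n / n)^{q/α}. -/

import Mathlib

open MeasureTheory Metric Set
open scoped RealInnerProductSpace ENNReal NNReal

noncomputable section

abbrev Euc (d : ℕ) := EuclideanSpace ℝ (Fin d)

def IsConvexBody {d : ℕ} (K : Set (Euc d)) : Prop :=
  Convex ℝ K ∧ IsCompact K ∧ (interior K).Nonempty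

def suppFn {d : ℕ} (K : Set (Euc d)) (u : Euc d) : ℝ :=
  sSup ((fun x => (inner ℝ u x : ℝ)) '' K)

def cap {d : ℕ} (K : Set (Euc d)) (u : Euc d) (ε : ℝ) : Set (Euc d) :=
  {x ∈ K | suppFn K u - ε ≤ (inner ℝ u x : ℝ)}

def measSupp {d : ℕ} (μ : Measure (Euc d)) : Set (Euc d) :=
  (⋃₀ {O : Set (Euc d) | IsOpen O ∧ μ O = 0})ᶜ

def MemM {d : ℕ} (α L ε₀ : ℝ) (μ : Measure (Euc d)) (K : Set (Euc d)) : Prop :=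
  IsProbabilityMeasure μ ∧ IsConvexBody K ∧ K ⊆ closedBall 0 1 ∧
    measSupp μ ⊆ K ∧
    ∀ u : Euc d, ‖u‖ = 1 → ∀ ε : ℝ, ε ∈ Icc 0 ε₀ →
      ENNReal.ofReal (L * ε ^ α) ≤ μ (cap K u ε)

def Cconst (α : ℝ) : ℝ := ⨅ t : {t : ℝ // 0 < t}, (1 + t.1) ^ α / (1 + t.1 ^ α)

def hullOf {d n : ℕ} (ω : Fin n → Euc d) : Set (Euc d) := convexHull ℝ (Set.range ω)

def jointLaw {d : ℕ} (n : ℕ) (μ : Measure (Euc d)) : Measure (Fin n → Euc d) :=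
  Measure.pi fun _ => μ

def sphereσ (d : ℕ) : Measure (Euc d) :=
  (Measure.hausdorffMeasure ((d:ℝ)-1) (sphere (0:Euc d) 1))⁻¹ •
    (Measure.hausdorffMeasure ((d:ℝ)-1) : Measure (Euc d)).restrict (sphere (0:Euc d) 1)

def lpNorm (d : ℕ) (p : ℝ) (f : Euc d → ℝ) : ℝ :=
  (∫ u, |f u| ^ p ∂(sphereσ d)) ^ (1/p)

def unitBallVol (p : ℕ) : ℝ := (volume (closedBall (0 : Euc p) 1)).toReal

def unifOn {d : ℕ} (K : Set (Euc d)) : Measure (Euc d) := (volume K)⁻¹ • volume.restrict K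

def unifBd {d : ℕ} (K : Set (Euc d)) : Measure (Euc d) :=
  (Measure.hausdorffMeasure ((d:ℝ)-1) (frontier K))⁻¹ •
    (Measure.hausdorffMeasure ((d:ℝ)-1) : Measure (Euc d)).restrict (frontier K)

def Rolling {d : ℕ} (r : ℝ) (K : Set (Euc d)) : Prop :=
  ∀ x ∈ frontier K, ∃ c : Euc d, x ∈ closedBall c r ∧ closedBall c r ⊆ K

def Kdr1 (d : ℕ) (r : ℝ) : Set (Set (Euc d)) :=
  {K | IsConvexBody K ∧ K ⊆ closedBall 0 1 ∧ Rolling r K}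

def Krd (d : ℕ) (r : ℝ) : Set (Set (Euc d)) :=
  {K | IsConvexBody K ∧ Rolling (r * ((volume K).toReal / unitBallVol d) ^ (1/(d:ℝ))) K}

def dL {d : ℕ} (K K' : Set (Euc d)) : ℝ :=
  sInf {ε : ℝ | 0 ≤ ε ∧ ∃ a : Euc d,
    (fun y => a + (1 - ε) • (y - a)) '' K ⊆ K' ∧
    K' ⊆ (fun y => a + (1 + ε) • (y - a)) '' K}

/-!
Fix `ε ≤ ε₀` and an `ε / 2`-net of at most `(1 + 4 / ε) ^ d` unit directions. If
`d_H(K̂ₙ, K) > 2ε`, separate a point of `K` at distance `> 2ε` from the hull by a unit normal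
and replace that normal by the nearest net direction `v`: no sample then lies in the cap
`C_K(v, ε)`, an event of probability at most `(1 - Lε^α)^n ≤ exp(-nLε^α)`. As `d_H ≤ 2` always,
`E[d_H^q] ≤ (2ε)^q + 2^q (1 + 4/ε)^d exp(-nLε^α)`, and `ε^α = (q + d)/(Lα) · ln n / n` turns the
exponential into `n^{-(q+d)/α} ≲ ε^{q+d}`, so both terms are `O(ε^q) = O((ln n / n)^{q/α})`.
If this `ε` exceeds `ε₀`, the trivial bound `2^q ≤ (2/ε₀)^q ε^q` suffices.
-/

section Packing

variable {E : Type*} [NormedAddCommGroup E] [NormedSpace ℝ E] [FiniteDimensional ℝ E]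

theorem card_le_of_isSeparated_of_subset_closedBall {δ : ℝ≥0} (hδ : 0 < δ) {s : Finset E}
    (hs : (s : Set E) ⊆ closedBall 0 1) (hsep : IsSeparated δ (s : Set E)) :
    (s.card : ℝ) ≤ (1 + 2 / δ) ^ Module.finrank ℝ E := by
  borelize E
  set μ : Measure E := Measure.addHaar
  set r : ℝ := δ / 2
  have hr : 0 < r := by positivity
  have hdisj : (s : Set E).PairwiseDisjoint fun x => closedBall x r := by
    intro x hx y hy hxy
    have hδxy : (δ : ℝ≥0∞) < edist x y := hsep hx hy hxy
    rw [edist_dist, ← ENNReal.ofReal_coe_nnreal, ENNReal.ofReal_lt_ofReal_iff'] at hδxy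
    exact closedBall_disjoint_closedBall (by rw [add_halves]; exact hδxy.1)
  have hunion : ⋃ x ∈ s, closedBall x r ⊆ closedBall 0 (1 + r) := by
    refine iUnion₂_subset fun x hx => closedBall_subset_closedBall' ?_
    simpa [add_comm] using hs hx
  have hvol := measureReal_mono (μ := μ) hunion measure_closedBall_lt_top.ne
  rw [measureReal_biUnion_finset hdisj (fun _ _ => measurableSet_closedBall)
    (fun _ _ => measure_closedBall_lt_top.ne), Finset.sum_congr rfl
    fun x _ => Measure.addHaar_real_closedBall μ x hr.le, Finset.sum_const, nsmul_eq_mul,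
    Measure.addHaar_real_closedBall μ _ (by positivity), ← mul_assoc] at hvol
  have hball : 0 < μ.real (ball 0 1) :=
    ENNReal.toReal_pos (measure_ball_pos μ 0 one_pos).ne' measure_ball_lt_top.ne
  have hcard := le_of_mul_le_mul_right hvol hball
  calc (s.card : ℝ) ≤ (1 + r) ^ Module.finrank ℝ E / r ^ Module.finrank ℝ E :=
        (le_div_iff₀ (by positivity)).2 hcard
    _ = (1 + 2 / δ) ^ Module.finrank ℝ E := by
        rw [← div_pow]; congr 1; simp only [r]; field_simp; ring

theorem encard_le_of_isSeparated_of_subset_closedBall {δ : ℝ≥0} (hδ : 0 < δ) {C : Set E}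
    (hC : C ⊆ closedBall 0 1) (hsep : IsSeparated δ C) :
    C.encard ≤ ⌊(1 + 2 / (δ : ℝ)) ^ Module.finrank ℝ E⌋₊ := by
  by_contra! hlt
  obtain ⟨t, htC, ht⟩ := exists_subset_encard_eq (Order.add_one_le_of_lt hlt)
  have htfin : t.Finite := finite_of_encard_eq_coe (k := _ + 1) (by exact_mod_cast ht)
  have hcard := card_le_of_isSeparated_of_subset_closedBall hδ (s := htfin.toFinset)
    (by simpa using htC.trans hC) (by simpa using hsep.subset htC)
  have htcard : htfin.toFinset.card = ⌊(1 + 2 / (δ : ℝ)) ^ Module.finrank ℝ E⌋₊ + 1 := by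
    exact_mod_cast htfin.encard_eq_coe_toFinset_card.symm.trans ht
  rw [htcard, Nat.cast_add_one] at hcard
  exact hcard.not_gt (Nat.lt_floor_add_one _)

theorem exists_finset_sphere_net {δ : ℝ} (hδ : 0 < δ) :
    ∃ s : Finset E, (s : Set E) ⊆ sphere 0 1 ∧
      (s.card : ℝ) ≤ (1 + 2 / δ) ^ Module.finrank ℝ E ∧
      ∀ x ∈ sphere (0 : E) 1, ∃ v ∈ s, dist x v ≤ δ := by
  lift δ to ℝ≥0 using hδ.le
  have hδ' : 0 < δ := by exact_mod_cast hδ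
  have hpack : packingNumber δ (sphere (0 : E) 1) ≠ ⊤ := by
    refine ne_top_of_le_ne_top (ENat.natCast_ne_top ⌊(1 + 2 / (δ : ℝ)) ^ Module.finrank ℝ E⌋₊) ?_
    exact iSup₂_le fun C hC => iSup_le fun hsep =>
      encard_le_of_isSeparated_of_subset_closedBall hδ' (hC.trans sphere_subset_closedBall) hsep
  have hfin : (maximalSeparatedSet δ (sphere (0 : E) 1)).Finite := by
    rw [← encard_ne_top_iff, encard_maximalSeparatedSet hpack]; exact hpack
  refine ⟨hfin.toFinset, by simpa using maximalSeparatedSet_subset, ?_, fun x hx => ?_⟩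
  · exact card_le_of_isSeparated_of_subset_closedBall hδ'
      (by simpa using maximalSeparatedSet_subset.trans sphere_subset_closedBall)
      (by simpa using isSeparated_maximalSeparatedSet)
  · simpa using isCover_iff_subset_iUnion_closedBall.1 (isCover_maximalSeparatedSet hpack) hx

end Packing

section Separation

variable {F : Type*} [NormedAddCommGroup F] [InnerProductSpace ℝ F]

theorem exists_norm_eq_one_inner_add_infDist_le {S : Set F} (hS : IsCompact S)
    (hconv : Convex ℝ S) (hne : S.Nonempty) {x : F} (hx : 0 < infDist x S) :
    ∃ u : F, ‖u‖ = 1 ∧ ∀ y ∈ S, ⟪u, y⟫ + infDist x S ≤ ⟪u, x⟫ := by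
  obtain ⟨p, hp, hxp⟩ := hS.exists_infDist_eq_dist hne x
  rw [hxp, dist_eq_norm] at hx ⊢
  have hproj : ∀ y ∈ S, ⟪x - p, y - p⟫ ≤ 0 := by
    refine (norm_eq_iInf_iff_real_inner_le_zero hconv hp).1 ?_
    have := hne.to_subtype
    simpa only [dist_eq_norm] using hxp.symm.trans infDist_eq_iInf
  refine ⟨‖x - p‖⁻¹ • (x - p), by simp [norm_smul, hx.ne'], fun y hy => ?_⟩
  have hxy : ‖x - p‖ * ‖x - p‖ ≤ ⟪x - p, x - y⟫ := by
    rw [show x - y = (x - p) - (y - p) by abel, inner_sub_right, real_inner_self_eq_norm_mul_norm]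
    linarith [hproj y hy]
  have := (le_inv_mul_iff₀ hx).2 hxy
  rw [inner_sub_right, mul_sub] at this
  rw [real_inner_smul_left, real_inner_smul_left]
  linarith

theorem inner_le_inner_add_mul_norm_sub (u v : F) {y : F} {r : ℝ} (hy : ‖y‖ ≤ r) :
    ⟪u, y⟫ ≤ ⟪v, y⟫ + r * ‖u - v‖ := by
  have h := real_inner_le_norm (u - v) y
  rw [inner_sub_left] at h
  nlinarith [norm_nonneg (u - v)]

end Separation

theorem hausdorffDist_le_of_subset_closedBall {X : Type*} [PseudoMetricSpace X] {s t : Set X}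
    {c : X} {r : ℝ} (hs : s.Nonempty) (ht : t.Nonempty) (hsr : s ⊆ closedBall c r)
    (htr : t ⊆ closedBall c r) : hausdorffDist s t ≤ 2 * r := by
  have hr : 0 ≤ r := nonempty_closedBall.1 (hs.mono hsr)
  calc hausdorffDist s t
      ≤ diam (s ∪ t) := hausdorffDist_le_diam hs (isBounded_closedBall.subset hsr) ht
        (isBounded_closedBall.subset htr)
    _ ≤ diam (closedBall c r) := diam_mono (union_subset hsr htr) isBounded_closedBall
    _ ≤ 2 * r := diam_closedBall hr

section SupportFunction

variable {d : ℕ} {K : Set (Euc d)}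

theorem le_suppFn (hK : IsCompact K) {x : Euc d} (hx : x ∈ K) (u : Euc d) :
    ⟪u, x⟫ ≤ suppFn K u :=
  le_csSup (hK.image (continuous_const.inner continuous_id)).bddAbove ⟨x, hx, rfl⟩

theorem suppFn_le_suppFn_add_mul_norm_sub (hne : K.Nonempty) (hK : IsCompact K) {r : ℝ}
    (hKr : K ⊆ closedBall 0 r) (u v : Euc d) :
    suppFn K u ≤ suppFn K v + r * ‖u - v‖ :=
  csSup_le (hne.image _) <| forall_mem_image.2 fun x hx =>
    (inner_le_inner_add_mul_norm_sub u v (mem_closedBall_zero_iff.1 (hKr hx))).trans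
      (by gcongr; exact le_suppFn hK hx v)

theorem measurableSet_cap (hK : IsClosed K) (u : Euc d) (ε : ℝ) : MeasurableSet (cap K u ε) :=
  hK.measurableSet.inter <| measurableSet_le (f := fun _ => suppFn K u - ε) measurable_const
    (measurable_const.inner measurable_id)

theorem exists_disjoint_cap_of_lt_hausdorffDist (hK : IsCompact K) (hK1 : K ⊆ closedBall 0 1)
    {P : Set (Euc d)} (hP : IsCompact P) (hPconv : Convex ℝ P) (hPne : P.Nonempty) (hPK : P ⊆ K)
    {ε : ℝ} (hε : 0 ≤ ε) {s : Finset (Euc d)}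
    (hnet : ∀ u ∈ sphere (0 : Euc d) 1, ∃ v ∈ s, dist u v ≤ ε / 2)
    (h : 2 * ε < hausdorffDist P K) : ∃ v ∈ s, Disjoint P (cap K v ε) := by
  obtain ⟨x, hxK, hx⟩ : ∃ x ∈ K, 2 * ε < infDist x P := by
    by_contra! hc
    refine h.not_ge (hausdorffDist_le_of_infDist (by positivity) (fun y hy => ?_) hc)
    rw [infDist_zero_of_mem (hPK hy)]
    positivity
  obtain ⟨u, hu, hsep⟩ :=
    exists_norm_eq_one_inner_add_infDist_le hP hPconv hPne (x := x) (by linarith)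
  obtain ⟨v, hvs, huv⟩ := hnet u (mem_sphere_zero_iff_norm.2 hu)
  refine ⟨v, hvs, disjoint_left.2 fun y hyP ⟨hyK, hycap⟩ => ?_⟩
  rw [dist_eq_norm] at huv
  have hsupp := suppFn_le_suppFn_add_mul_norm_sub (hPne.mono hPK) hK hK1 u v
  have hvy := inner_le_inner_add_mul_norm_sub v u (mem_closedBall_zero_iff.1 (hK1 hyK))
  rw [norm_sub_rev] at hvy
  linarith [le_suppFn hK hxK u, hsep y hyP]

end SupportFunction

section Probability

variable {Ω : Type*} [MeasurableSpace Ω] {P : Measure Ω} [IsProbabilityMeasure P]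

theorem prob_compl_le_exp_neg {A : Set Ω} (hA : MeasurableSet A) {c : ℝ}
    (hc : ENNReal.ofReal c ≤ P A) : P Aᶜ ≤ ENNReal.ofReal (Real.exp (-c)) := by
  rw [prob_compl_eq_one_sub hA]
  calc 1 - P A ≤ 1 - ENNReal.ofReal c := tsub_le_tsub_left hc 1
    _ ≤ ENNReal.ofReal (1 - c) := by
        rw [tsub_le_iff_right, ← ENNReal.ofReal_one]
        exact (ENNReal.ofReal_le_ofReal (by linarith)).trans ENNReal.ofReal_add_le
    _ ≤ ENNReal.ofReal (Real.exp (-c)) := by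
        gcongr; linarith [Real.add_one_le_exp (-c)]

theorem lintegral_ofReal_rpow_le {Z : Ω → ℝ} {B : Set Ω} (hB : MeasurableSet B) {a b q : ℝ}
    (hq : 0 ≤ q) (hZ : ∀ᵐ ω ∂P, 0 ≤ Z ω ∧ Z ω ≤ b ∧ (a < Z ω → ω ∈ B)) :
    ∫⁻ ω, ENNReal.ofReal (Z ω ^ q) ∂P ≤
      ENNReal.ofReal (a ^ q) + ENNReal.ofReal (b ^ q) * P B := by
  calc ∫⁻ ω, ENNReal.ofReal (Z ω ^ q) ∂P
      ≤ ∫⁻ ω, ENNReal.ofReal (a ^ q) + B.indicator (fun _ => ENNReal.ofReal (b ^ q)) ω ∂P := by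
        refine lintegral_mono_ae (hZ.mono fun ω ⟨hZ0, hZb, hZB⟩ => ?_)
        rcases le_or_gt (Z ω) a with hZa | hZa
        · exact le_add_right (by gcongr)
        · rw [indicator_of_mem (hZB hZa)]
          exact le_add_left (by gcongr)
    _ = ENNReal.ofReal (a ^ q) + ENNReal.ofReal (b ^ q) * P B := by
        rw [lintegral_add_left measurable_const, lintegral_const, measure_univ, mul_one,
          lintegral_indicator_const hB]

end Probability

section Sampling

variable {d n : ℕ} {μ : Measure (Euc d)}

theorem measSupp_eq_support : measSupp μ = μ.support := by
  rw [measSupp, ← Measure.compl_support_eq_sUnion, compl_compl]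

instance [IsProbabilityMeasure μ] : IsProbabilityMeasure (jointLaw n μ) := by
  unfold jointLaw; infer_instance

theorem ae_jointLaw_forall_mem [IsProbabilityMeasure μ] {A : Set (Euc d)}
    (hA : ∀ᵐ x ∂μ, x ∈ A) : ∀ᵐ ω ∂jointLaw n μ, ∀ i, ω i ∈ A :=
  ae_all_iff.2 fun i => (measurePreserving_eval (fun _ => μ) i).quasiMeasurePreserving.ae hA

end Sampling

theorem rpow_add_mul_exp_le {d n : ℕ} (hn : 2 ≤ n) {α L q m c N ε : ℝ} (hα : 0 < α)
    (hq : 0 ≤ q) (hm : 0 < m) (hc : 0 ≤ c) (hLm : L * m * α = q + d) (hε : 0 < ε)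
    (hεα : ε ^ α = m * (Real.log n / n)) (hN : N ≤ (c / ε) ^ d) :
    (2 * ε) ^ q + 2 ^ q * (N * Real.exp (-(n * (L * ε ^ α)))) ≤
      2 ^ q * (1 + c ^ d * (m * Real.log 2) ^ (-((q + d) / α))) * ε ^ q := by
  set κ := (q + d) / α
  have hn0 : (0 : ℝ) < n := by positivity
  have hexp : Real.exp (-(n * (L * ε ^ α))) = (n : ℝ)⁻¹ ^ κ := by
    rw [Real.rpow_def_of_pos (inv_pos.2 hn0), Real.log_inv, hεα]
    congr 1
    simp only [κ, ← hLm]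
    field_simp
  have hinv : (n : ℝ)⁻¹ ≤ ε ^ α / (m * Real.log 2) := by
    have h2n : (2 : ℝ) ≤ n := by exact_mod_cast hn
    rw [le_div_iff₀ (by positivity), hεα, div_eq_mul_inv]
    calc (n : ℝ)⁻¹ * (m * Real.log 2) = m * (Real.log 2 * (n : ℝ)⁻¹) := by ring
      _ ≤ m * (Real.log n * (n : ℝ)⁻¹) := by gcongr
  have hdecay : (n : ℝ)⁻¹ ^ κ ≤ ε ^ (q + d) * (m * Real.log 2) ^ (-κ) := by
    calc (n : ℝ)⁻¹ ^ κ ≤ (ε ^ α / (m * Real.log 2)) ^ κ := by gcongr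
      _ = ε ^ (q + d) * (m * Real.log 2) ^ (-κ) := by
        rw [Real.div_rpow (by positivity) (by positivity), ← Real.rpow_mul hε.le,
          Real.rpow_neg (by positivity), div_eq_mul_inv]
        simp only [κ]
        field_simp
  have hsplit : ε ^ (q + d) = ε ^ q * ε ^ d := by
    rw [Real.rpow_add hε, Real.rpow_natCast]
  calc (2 * ε) ^ q + 2 ^ q * (N * Real.exp (-(n * (L * ε ^ α))))
      ≤ 2 ^ q * ε ^ q + 2 ^ q * ((c / ε) ^ d * (ε ^ (q + d) * (m * Real.log 2) ^ (-κ))) := by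
        rw [Real.mul_rpow zero_le_two hε.le, hexp]
        gcongr
    _ = 2 ^ q * (1 + c ^ d * (m * Real.log 2) ^ (-κ)) * ε ^ q := by
        rw [hsplit, div_pow]
        field_simp

theorem hullOf_nonempty {d n : ℕ} (hn : 0 < n) (ω : Fin n → Euc d) : (hullOf ω).Nonempty :=
  ⟨ω ⟨0, hn⟩, subset_convexHull ℝ _ (mem_range_self _)⟩

namespace MemM

variable {d n : ℕ} {α L ε₀ : ℝ} {μ : Measure (Euc d)} {K : Set (Euc d)}

theorem ae_hullOf_subset (hM : MemM α L ε₀ μ K) : ∀ᵐ ω ∂jointLaw n μ, hullOf ω ⊆ K := by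
  obtain ⟨hprob, ⟨hconv, -, -⟩, -, hsupp, -⟩ := hM
  have hK : ∀ᵐ x ∂μ, x ∈ K :=
    Filter.mem_of_superset Measure.support_mem_ae (measSupp_eq_support ▸ hsupp)
  filter_upwards [ae_jointLaw_forall_mem hK] with ω hω
  exact convexHull_min (range_subset_iff.2 hω) hconv

theorem ae_hausdorffDist_hullOf_le_two (hM : MemM α L ε₀ μ K) (hn : 0 < n) :
    ∀ᵐ ω ∂jointLaw n μ, hausdorffDist (hullOf ω) K ≤ 2 := by
  filter_upwards [hM.ae_hullOf_subset] with ω hω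
  simpa using hausdorffDist_le_of_subset_closedBall (hullOf_nonempty hn ω)
    ((hullOf_nonempty hn ω).mono hω) (hω.trans hM.2.2.1) hM.2.2.1

theorem lintegral_hausdorffDist_rpow_le_two_rpow (hM : MemM α L ε₀ μ K) (hn : 0 < n) {q : ℝ}
    (hq : 0 ≤ q) :
    ∫⁻ ω, ENNReal.ofReal (hausdorffDist (hullOf ω) K ^ q) ∂jointLaw n μ ≤
      ENNReal.ofReal (2 ^ q) := by
  have := hM.1
  calc ∫⁻ ω, ENNReal.ofReal (hausdorffDist (hullOf ω) K ^ q) ∂jointLaw n μ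
      ≤ ∫⁻ _, ENNReal.ofReal (2 ^ q) ∂jointLaw n μ :=
        lintegral_mono_ae <| (hM.ae_hausdorffDist_hullOf_le_two hn).mono fun ω hω => by
          gcongr; exact hausdorffDist_nonneg
    _ = ENNReal.ofReal (2 ^ q) := by rw [lintegral_const, measure_univ, mul_one]

theorem lintegral_hausdorffDist_rpow_le (hM : MemM α L ε₀ μ K) (hn : 0 < n) {ε q : ℝ}
    (hε : 0 < ε) (hεε₀ : ε ≤ ε₀) (hq : 0 ≤ q) :
    ∫⁻ ω, ENNReal.ofReal (hausdorffDist (hullOf ω) K ^ q) ∂jointLaw n μ ≤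
      ENNReal.ofReal
        ((2 * ε) ^ q + 2 ^ q * ((1 + 4 / ε) ^ d * Real.exp (-(n * (L * ε ^ α))))) := by
  obtain ⟨hprob, ⟨-, hcpt, -⟩, hK1, -, hcap⟩ := id hM
  obtain ⟨s, hs, hcard, hnet⟩ := exists_finset_sphere_net (E := Euc d) (half_pos hε)
  rw [finrank_euclideanSpace_fin, div_div_eq_mul_div, show (2 : ℝ) * 2 = 4 by norm_num] at hcard
  set B := ⋃ v ∈ s, univ.pi fun _ : Fin n => (cap K v ε)ᶜ
  have hB : MeasurableSet B := Finset.measurableSet_biUnion s fun v _ =>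
    MeasurableSet.univ_pi fun _ => (measurableSet_cap hcpt.isClosed v ε).compl
  have hprobB : jointLaw n μ B ≤
      ENNReal.ofReal ((1 + 4 / ε) ^ d * Real.exp (-(n * (L * ε ^ α)))) := by
    calc jointLaw n μ B ≤ ∑ v ∈ s, jointLaw n μ (univ.pi fun _ => (cap K v ε)ᶜ) :=
          measure_biUnion_finset_le _ _
      _ ≤ ∑ _v ∈ s, ENNReal.ofReal (Real.exp (-(L * ε ^ α))) ^ n := by
          refine Finset.sum_le_sum fun v hv => ?_
          rw [jointLaw, Measure.pi_pi, Finset.prod_const, Finset.card_univ, Fintype.card_fin]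
          exact pow_le_pow_left' (prob_compl_le_exp_neg (measurableSet_cap hcpt.isClosed v ε)
            (hcap v (mem_sphere_zero_iff_norm.1 (hs hv)) ε ⟨hε.le, hεε₀⟩)) n
      _ = ENNReal.ofReal (s.card * Real.exp (-(n * (L * ε ^ α)))) := by
          rw [Finset.sum_const, nsmul_eq_mul, ← ENNReal.ofReal_pow (Real.exp_nonneg _),
            ← Real.exp_nat_mul, ← ENNReal.ofReal_natCast, ← ENNReal.ofReal_mul (by positivity),
            mul_neg]
      _ ≤ _ := by gcongr
  have hfar : ∀ᵐ ω ∂jointLaw n μ, 0 ≤ hausdorffDist (hullOf ω) K ∧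
      hausdorffDist (hullOf ω) K ≤ 2 ∧ (2 * ε < hausdorffDist (hullOf ω) K → ω ∈ B) := by
    filter_upwards [hM.ae_hullOf_subset, hM.ae_hausdorffDist_hullOf_le_two hn] with ω hωK hω2
    refine ⟨hausdorffDist_nonneg, hω2, fun hgap => ?_⟩
    obtain ⟨v, hv, hdisj⟩ := exists_disjoint_cap_of_lt_hausdorffDist hcpt hK1
      ((finite_range ω).isCompact_convexHull (𝕜 := ℝ)) (convex_convexHull ℝ _)
      (hullOf_nonempty hn ω) hωK hε.le hnet hgap
    exact mem_biUnion hv fun i _ => disjoint_left.1 hdisj (subset_convexHull ℝ _ (mem_range_self i))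
  refine (lintegral_ofReal_rpow_le hB hq hfar).trans ?_
  rw [ENNReal.ofReal_add (by positivity) (by positivity), ENNReal.ofReal_mul (by positivity)]
  gcongr

theorem lintegral_hausdorffDist_rpow_le_mul_rpow (hM : MemM α L ε₀ μ K) (hn : 2 ≤ n)
    (hα : 0 < α) (hε₀ : 0 < ε₀) {m ε q : ℝ} (hq : 0 ≤ q) (hm : 0 < m)
    (hLm : L * m * α = q + d) (hε : 0 < ε) (hεα : ε ^ α = m * (Real.log n / n)) :
    ∫⁻ ω, ENNReal.ofReal (hausdorffDist (hullOf ω) K ^ q) ∂jointLaw n μ ≤ ENNReal.ofReal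
      ((2 ^ q * (1 + (ε₀ + 4) ^ d * (m * Real.log 2) ^ (-((q + d) / α))) + (2 / ε₀) ^ q) *
        ε ^ q) := by
  rcases le_or_gt ε ε₀ with hεε₀ | hε₀ε
  · refine (hM.lintegral_hausdorffDist_rpow_le (by omega) hε hεε₀ hq).trans
      (ENNReal.ofReal_le_ofReal ?_)
    have hN : (1 + 4 / ε) ^ d ≤ ((ε₀ + 4) / ε) ^ d := by
      gcongr; rw [add_div' _ _ _ hε.ne', one_mul]; gcongr
    refine (rpow_add_mul_exp_le hn hα hq hm (by positivity) hLm hε hεα hN).trans ?_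
    gcongr
    exact le_add_of_nonneg_right (by positivity)
  · refine (hM.lintegral_hausdorffDist_rpow_le_two_rpow (by omega) hq).trans
      (ENNReal.ofReal_le_ofReal ?_)
    calc (2 : ℝ) ^ q ≤ (2 / ε₀ * ε) ^ q := by
          gcongr; rw [div_mul_eq_mul_div, le_div_iff₀ hε₀]; linarith
      _ ≤ _ := by
          rw [Real.mul_rpow (by positivity) hε.le]
          gcongr
          exact le_add_of_nonneg_left (by positivity)

end MemM

theorem stmt1_general (d : ℕ) (α L ε₀ : ℝ) (hα : 0 < α) (hL : 0 < L)
    (hε₀ : 0 < ε₀) (q : ℝ) (hq : 1 ≤ q) :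
    ∃ C > (0:ℝ), ∀ n : ℕ, 2 ≤ n →
      ∀ (μ : Measure (Euc d)) (K : Set (Euc d)), MemM α L ε₀ μ K →
        ∫⁻ ω, ENNReal.ofReal (hausdorffDist (hullOf ω) K ^ q) ∂(jointLaw n μ)
          ≤ ENNReal.ofReal (C * (Real.log n / n) ^ (q/α)) := by
  have hq0 : 0 ≤ q := by linarith
  set m := (q + d) / (L * α)
  have hm : 0 < m := by positivity
  refine ⟨(2 ^ q * (1 + (ε₀ + 4) ^ d * (m * Real.log 2) ^ (-((q + d) / α))) + (2 / ε₀) ^ q) *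
    m ^ (q / α), by positivity, fun n hn μ K hM => ?_⟩
  have hmt : 0 < m * (Real.log n / n) := by
    have := Real.log_pos (by exact_mod_cast hn : (1 : ℝ) < n)
    positivity
  have hbound := hM.lintegral_hausdorffDist_rpow_le_mul_rpow hn hα hε₀ hq0 hm
    (ε := (m * (Real.log n / n)) ^ (1 / α)) (by simp only [m]; field_simp) (by positivity)
    (by rw [← Real.rpow_mul hmt.le, one_div_mul_cancel hα.ne', Real.rpow_one])
  rwa [← Real.rpow_mul hmt.le, one_div_mul_eq_div,
    Real.mul_rpow (y := Real.log n / n) hm.le (by positivity),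
    ← mul_assoc] at hbound

theorem stmt1 (d : ℕ) (hd : 1 ≤ d) (α L ε₀ : ℝ) (hα : 0 < α) (hL : 0 < L)
    (hε₀ : 0 < ε₀) (hε₀1 : ε₀ < 1) (q : ℝ) (hq : 1 ≤ q) :
    ∃ C > (0:ℝ), ∀ n : ℕ, 2 ≤ n →
      ∀ (μ : Measure (Euc d)) (K : Set (Euc d)), MemM α L ε₀ μ K →
        ∫⁻ ω, ENNReal.ofReal (hausdorffDist (hullOf ω) K ^ q) ∂(jointLaw n μ)
          ≤ ENNReal.ofReal (C * (Real.log n / n) ^ (q/α)) :=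
  stmt1_general d α L ε₀ hα hL hε₀ q hq
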